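/- Let p ≥ 2 be an integer, α ∈ (0,1), and let ĉ = log 2/log p. There exist constants b̂ > 0 (depending on α and p) and N > 0 (depending on p) such that for every integer n ≥ N there exist real polynomials P and Q, with deg P ≤ n−p+1 and deg Q ≤ n, such that Q(z) ≠ 0 for every z ∈ S_{p,α} and |P(z)/Q(z) − sect_p(z)| ≤ exp(−b̂·n^ĉ) for every z ∈ S_{p,α}. -/

import Mathlib

/-- The set `S_{p,α} = { x e^(2πij/p) : x ∈ [α,1], j ∈ {1,…,p} } ⊆ ℂ`. -/
def sectorSetAway (p : ℕ) (α : ℝ) : Set ℂ :=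
  {z | ∃ x ∈ Set.Icc α 1, ∃ j ∈ Finset.Icc 1 p,
    z = (x : ℂ) * Complex.exp (2 * (Real.pi : ℂ) * Complex.I * j / p)}

/- ### Auxiliary development: truncated binomial series for `t ^ θ` at `t = 1`. -/

/-- Coefficients `bcoef θ m = (-1)^(m+1) (m+1) C(θ, m+1)` driving the Taylor remainder. -/
noncomputable def bcoef (θ : ℝ) : ℕ → ℝ
  | 0 => -θ
  | (m+1) => -bcoef θ m * (θ - (m+1)) / (m+1)

/-- Taylor polynomial of `t ^ θ` at `t = 1` of degree `m`. -/
noncomputable def bpoly (θ : ℝ) : ℕ → Polynomial ℝ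
  | 0 => 1
  | (m+1) => bpoly θ m + Polynomial.C (bcoef θ m / (m+1)) * (1 - Polynomial.X)^(m+1)

lemma bcoef_abs_le (θ : ℝ) (hθ : θ ∈ Set.Ioo (0:ℝ) 1) (m : ℕ) : |bcoef θ m| ≤ 1 := by
  induction m with
  | zero => simp [bcoef]; rw [abs_of_nonneg hθ.1.le]; exact hθ.2.le
  | succ m ih =>
      have hm : (0:ℝ) < m + 1 := by positivity
      rw [bcoef, abs_div, abs_mul, abs_neg]
      rw [div_le_one (by rw [abs_of_pos hm]; exact hm)]
      have h1 : |θ - (m+1:ℝ)| ≤ m + 1 := by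
        rw [abs_sub_comm, abs_of_nonneg (by linarith [hθ.2])]
        linarith [hθ.1]
      calc |bcoef θ m| * |θ - (m+1:ℝ)| ≤ 1 * (m+1) := by
            exact mul_le_mul ih h1 (abs_nonneg _) one_pos.le
        _ = |(m:ℝ)+1| := by rw [one_mul, abs_of_pos hm]

lemma bpoly_natDegree_le (θ : ℝ) (m : ℕ) : (bpoly θ m).natDegree ≤ m := by
  induction m with
  | zero => simp [bpoly]
  | succ m ih =>
      rw [bpoly]
      refine Polynomial.natDegree_add_le_of_degree_le (le_trans ih (by omega)) ?_
      refine le_trans (Polynomial.natDegree_mul_le) ?_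
      simp only [Polynomial.natDegree_C, zero_add]
      calc ((1 - Polynomial.X : Polynomial ℝ)^(m+1)).natDegree
          ≤ (m+1) * (1 - Polynomial.X : Polynomial ℝ).natDegree := Polynomial.natDegree_pow_le
        _ ≤ (m+1) * 1 := by
            exact Nat.mul_le_mul_left _ (le_trans (Polynomial.natDegree_sub_le _ _) (by simp))
        _ = m + 1 := by ring

lemma parts_step (t : ℝ) (ht0 : 0 < t) (ht1 : t ≤ 1) (m : ℕ) (c : ℝ) :
    ∫ s in t..1, (s - t)^m * s ^ c =
      (1 - t)^(m+1) / ((m:ℝ)+1) - c / ((m:ℝ)+1) * ∫ s in t..1, (s - t)^(m+1) * s ^ (c - 1) := by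
  have huIcc : Set.uIcc t 1 = Set.Icc t 1 := Set.uIcc_of_le ht1
  have hpos : ∀ x ∈ Set.uIcc t 1, 0 < x := by
    intro x hx; rw [huIcc] at hx; exact lt_of_lt_of_le ht0 hx.1
  have hu : ∀ x ∈ Set.uIcc t 1, HasDerivAt (fun s : ℝ => s ^ c) (c * x ^ (c - 1)) x :=
    fun x hx => Real.hasDerivAt_rpow_const (Or.inl (hpos x hx).ne')
  have hv : ∀ x ∈ Set.uIcc t 1,
      HasDerivAt (fun s : ℝ => (s - t)^(m+1) / ((m:ℝ)+1)) ((x - t)^m) x := by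
    intro x _
    have h := (((hasDerivAt_id x).sub_const t).pow (m+1)).div_const ((m:ℝ)+1)
    refine HasDerivAt.congr_deriv h ?_
    push_cast
    field_simp
    rfl
  have hiu : IntervalIntegrable (fun x : ℝ => c * x ^ (c - 1)) MeasureTheory.volume t 1 := by
    apply ContinuousOn.intervalIntegrable
    exact (continuousOn_id.rpow_const (fun x hx => Or.inl (hpos x hx).ne')).const_smul c
  have hiv : IntervalIntegrable (fun x : ℝ => (x - t)^m) MeasureTheory.volume t 1 :=
    (Continuous.intervalIntegrable (by continuity) t 1)
  have H := intervalIntegral.integral_mul_deriv_eq_deriv_mul hu hv hiu hiv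
  have h1 : (∫ s in t..1, (s - t)^m * s ^ c) = ∫ s in t..1, s ^ c * (s - t)^m :=
    intervalIntegral.integral_congr (fun x _ => mul_comm _ _)
  rw [h1, H]
  rw [Real.one_rpow, sub_self, zero_pow (Nat.succ_ne_zero m), zero_div, mul_zero, sub_zero]
  have h2 : (∫ x in t..1, c * x ^ (c-1) * ((x - t)^(m+1) / ((m:ℝ)+1)))
      = ∫ x in t..1, (c / ((m:ℝ)+1)) * ((x - t)^(m+1) * x ^ (c-1)) :=
    intervalIntegral.integral_congr (fun x _ => by ring)
  rw [h2, intervalIntegral.integral_const_mul]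
  ring

lemma key_identity (θ : ℝ) (hθ : θ ∈ Set.Ioo (0:ℝ) 1) (t : ℝ) (ht0 : 0 < t) (ht1 : t ≤ 1)
    (m : ℕ) :
    t ^ θ - (bpoly θ m).eval t
      = bcoef θ m * ∫ s in t..1, (s - t)^m * s ^ (θ - ((m:ℝ)+1)) := by
  induction m with
  | zero =>
      simp only [bpoly, bcoef, Polynomial.eval_one, Nat.cast_zero, pow_zero, one_mul, zero_add]
      rw [integral_rpow (Or.inl (by linarith [hθ.1]))]
      have hθ0 : θ ≠ 0 := hθ.1.ne'
      rw [show θ - 1 + 1 = θ by ring, Real.one_rpow]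
      field_simp
      ring
  | succ m ih =>
      have hparts := parts_step t ht0 ht1 m (θ - ((m:ℝ)+1))
      rw [bpoly, Polynomial.eval_add, Polynomial.eval_mul, Polynomial.eval_C,
        Polynomial.eval_pow, Polynomial.eval_sub, Polynomial.eval_one, Polynomial.eval_X]
      have : t ^ θ - ((bpoly θ m).eval t + bcoef θ m / ((m:ℝ)+1) * (1 - t)^(m+1))
          = (t ^ θ - (bpoly θ m).eval t) - bcoef θ m / ((m:ℝ)+1) * (1 - t)^(m+1) := by
        push_cast; ring
      rw [this, ih, hparts]
      have hint : (∫ s in t..1, (s - t)^(m+1) * s ^ (θ - ((m:ℝ)+1) - 1))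
          = ∫ s in t..1, (s - t)^(m+1) * s ^ (θ - (((m+1:ℕ):ℝ) + 1)) := by
        apply intervalIntegral.integral_congr
        intro x _
        congr 1
        push_cast; ring
      rw [hint]
      rw [bcoef]
      have hm : ((m:ℝ)+1) ≠ 0 := by positivity
      push_cast
      field_simp
      ring

lemma remainder_bound (θ : ℝ) (hθ : θ ∈ Set.Ioo (0:ℝ) 1)
    (hc : ∀ m, |bcoef θ m| ≤ 1)
    (β : ℝ) (hβ : 0 < β) (t : ℝ) (ht : t ∈ Set.Icc β 1) (m : ℕ) :
    |t ^ θ - (bpoly θ m).eval t| ≤ (1-β)^(m+1) * β ^ (θ-1) := by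
  have ht0 : 0 < t := lt_of_lt_of_le hβ ht.1
  have ht1 : t ≤ 1 := ht.2
  rw [key_identity θ hθ t ht0 ht1 m, abs_mul]
  have hbd : ∀ x ∈ Set.uIoc t 1,
      ‖(x - t)^m * x ^ (θ - ((m:ℝ)+1))‖ ≤ (1-t)^m * t ^ (θ-1) := by
    intro x hx
    rw [Set.uIoc_of_le ht1] at hx
    have hx0 : 0 < x := lt_trans ht0 hx.1
    have hxt : t ≤ x := hx.1.le
    have hx1 : x ≤ 1 := hx.2
    have hsplit : x ^ (θ - ((m:ℝ)+1)) = ((x:ℝ)^m)⁻¹ * x ^ (θ-1) := by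
      rw [show θ - ((m:ℝ)+1) = -(m:ℝ) + (θ-1) by ring, Real.rpow_add hx0,
        Real.rpow_neg hx0.le, Real.rpow_natCast]
    rw [hsplit, Real.norm_eq_abs]
    have hnn : 0 ≤ (x - t)^m * (((x:ℝ)^m)⁻¹ * x ^ (θ-1)) :=
      mul_nonneg (pow_nonneg (by linarith) m)
        (mul_nonneg (inv_nonneg.2 (pow_nonneg hx0.le m)) (Real.rpow_nonneg hx0.le _))
    rw [abs_of_nonneg hnn, ← mul_assoc, ← div_eq_mul_inv, ← div_pow]
    have h1 : (x - t)/x ≤ 1 - t := by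
      rw [div_le_iff₀ hx0]
      nlinarith
    have h2 : x ^ (θ-1) ≤ t ^ (θ-1) :=
      Real.rpow_le_rpow_of_nonpos ht0 hxt (by linarith [hθ.2])
    exact mul_le_mul (pow_le_pow_left₀ (div_nonneg (by linarith) hx0.le) h1 m) h2
      (Real.rpow_nonneg hx0.le _) (pow_nonneg (by linarith) m)
  have hint := intervalIntegral.norm_integral_le_of_norm_le_const hbd
  rw [Real.norm_eq_abs] at hint
  calc |bcoef θ m| * |∫ s in t..1, (s - t)^m * s ^ (θ - ((m:ℝ)+1))|
      ≤ 1 * ((1-t)^m * t ^ (θ-1) * |1 - t|) :=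
        mul_le_mul (hc m) hint (abs_nonneg _) one_pos.le
    _ = (1-t)^(m+1) * t ^ (θ-1) := by
        rw [one_mul, abs_of_nonneg (by linarith)]; ring
    _ ≤ (1-β)^(m+1) * β ^ (θ-1) := by
        apply mul_le_mul
        · exact pow_le_pow_left₀ (by linarith) (by linarith [ht.1]) _
        · exact Real.rpow_le_rpow_of_nonpos hβ ht.1 (by linarith [hθ.2])
        · exact Real.rpow_nonneg ht0.le _
        · exact pow_nonneg (by linarith [ht.1]) _

lemma sector_zpow (p : ℕ) (hp : 2 ≤ p) (x : ℝ) (j : ℕ) :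
    ((x : ℂ) * Complex.exp (2 * (Real.pi : ℂ) * Complex.I * j / p)) ^ p
      = ((x ^ p : ℝ) : ℂ) := by
  have hp0 : (p : ℂ) ≠ 0 := Nat.cast_ne_zero.2 (by omega)
  rw [mul_pow, ← Complex.exp_nat_mul]
  rw [show (p : ℂ) * (2 * (Real.pi : ℂ) * Complex.I * j / p) = (j : ℂ) * (2 * Real.pi * Complex.I) by
    field_simp]
  rw [Complex.exp_nat_mul_two_pi_mul_I]
  push_cast
  ring

lemma aeval_ofReal (A : Polynomial ℝ) (t : ℝ) :
    Polynomial.aeval ((t : ℝ) : ℂ) A = ((A.eval t : ℝ) : ℂ) := by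
  rw [show ((t:ℝ):ℂ) = algebraMap ℝ ℂ t from rfl, Polynomial.aeval_algebraMap_apply]
  simp

lemma abs_sector_exp (j p : ℕ) :
    ‖Complex.exp (2 * (Real.pi : ℂ) * Complex.I * j / p)‖ = 1 := by
  rw [Complex.norm_exp]
  have : (2 * (Real.pi : ℂ) * Complex.I * j / p).re = 0 := by
    simp [Complex.div_re, Complex.mul_re, Complex.mul_im]
  rw [this, Real.exp_zero]

/-- **Theorem 2, part 2.** Let `p ≥ 2`, `α ∈ (0,1)`, and `ĉ = log 2/log p`.  There exist
`b̂ > 0` (depending on `α` and `p`) and `N > 0` (depending on `p`) such that for every `n ≥ N`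
there is a rational function `P/Q` of type `(n-p+1, n)` with `Q ≠ 0` on `S_{p,α}` and
`|P(z)/Q(z) - sect_p(z)| ≤ exp(-b̂ n^ĉ)` for every `z ∈ S_{p,α}`. -/
theorem sector_composite_rational_approx_away_from_origin (p : ℕ) (hp : 2 ≤ p)
    (α : ℝ) (hα : α ∈ Set.Ioo (0 : ℝ) 1)
    (chat : ℝ) (hchat : chat = Real.log 2 / Real.log p) :
    ∃ (bhat : ℝ) (N : ℕ), 0 < bhat ∧ 0 < N ∧
      ∀ n : ℕ, N ≤ n →
        ∃ P Q : Polynomial ℝ,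
          P.natDegree ≤ n - p + 1 ∧ Q.natDegree ≤ n ∧
          (∀ z ∈ sectorSetAway p α, (Polynomial.aeval z) Q ≠ 0) ∧
          (∀ x ∈ Set.Icc α 1, ∀ j ∈ Finset.Icc 1 p,
            ‖
              ((Polynomial.aeval ((x : ℂ) * Complex.exp (2 * (Real.pi : ℂ) * Complex.I * j / p)) P /
                Polynomial.aeval ((x : ℂ) * Complex.exp (2 * (Real.pi : ℂ) * Complex.I * j / p)) Q) -
                Complex.exp (2 * (Real.pi : ℂ) * Complex.I * j / p))‖ ≤
              Real.exp (-(bhat * (n : ℝ) ^ chat))) := by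
  obtain ⟨hα0, hα1⟩ := hα
  have hp0 : (0:ℝ) < p := by exact_mod_cast Nat.lt_of_lt_of_le (by norm_num) hp
  have hp2 : (2:ℝ) ≤ p := by exact_mod_cast hp
  set θ : ℝ := ((p:ℝ) - 1) / p with hθdef
  have hθ : θ ∈ Set.Ioo (0:ℝ) 1 :=
    ⟨div_pos (by linarith) hp0, by rw [hθdef, div_lt_one hp0]; linarith⟩
  set β : ℝ := α ^ p with hβdef
  have hβ0 : 0 < β := pow_pos hα0 p
  have hβ1 : β < 1 := pow_lt_one₀ hα0.le hα1 (by omega)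
  set r : ℝ := 1 - β with hrdef
  have hr0 : 0 < r := by simp only [hrdef]; linarith
  have hr1 : r < 1 := by simp only [hrdef]; linarith
  set L : ℝ := -Real.log r with hLdef
  have hL : 0 < L := by
    rw [hLdef, neg_pos]
    exact Real.log_neg hr0 hr1
  set C0 : ℝ := β ^ (θ - 1) / β with hC0def
  have hC0 : 0 < C0 := div_pos (Real.rpow_pos_of_pos hβ0 _) hβ0
  refine ⟨L / (4*p), max (2*p) (⌈4*(p:ℝ)*Real.log C0/L⌉₊ + 1), by positivity,
    lt_of_lt_of_le (by omega : 0 < 2*p) (le_max_left _ _), ?_⟩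
  intro n hn
  have hn2p : 2*p ≤ n := le_trans (le_max_left _ _) hn
  have hnceil : 4*(p:ℝ)*Real.log C0/L ≤ n := by
    have h1 : ⌈4*(p:ℝ)*Real.log C0/L⌉₊ + 1 ≤ n := le_trans (le_max_right _ _) hn
    calc 4*(p:ℝ)*Real.log C0/L ≤ (⌈4*(p:ℝ)*Real.log C0/L⌉₊ : ℝ) := Nat.le_ceil _
      _ ≤ n := by exact_mod_cast Nat.le_of_succ_le h1
  set m : ℕ := (n - p) / p with hmdef
  refine ⟨Polynomial.X * (bpoly θ m).comp (Polynomial.X ^ p), Polynomial.X ^ p, ?_, ?_, ?_, ?_⟩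
  · calc (Polynomial.X * (bpoly θ m).comp (Polynomial.X ^ p)).natDegree
        ≤ (Polynomial.X : Polynomial ℝ).natDegree + ((bpoly θ m).comp (Polynomial.X ^ p)).natDegree :=
          Polynomial.natDegree_mul_le
      _ ≤ 1 + m * p := by
          rw [Polynomial.natDegree_comp, Polynomial.natDegree_X_pow, Polynomial.natDegree_X]
          exact Nat.add_le_add_left (Nat.mul_le_mul_right p (bpoly_natDegree_le θ m)) 1
      _ ≤ n - p + 1 := by
          have h2 : m * p ≤ n - p := by rw [hmdef]; exact Nat.div_mul_le_self _ _
          omega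
  · rw [Polynomial.natDegree_X_pow]; omega
  · rintro z ⟨x, hx, j, _, rfl⟩
    rw [map_pow, Polynomial.aeval_X]
    apply pow_ne_zero
    apply mul_ne_zero
    · exact Complex.ofReal_ne_zero.2 (ne_of_gt (lt_of_lt_of_le hα0 hx.1))
    · exact Complex.exp_ne_zero _
  · intro x hx j _
    have hx0 : 0 < x := lt_of_lt_of_le hα0 hx.1
    set ω : ℂ := Complex.exp (2 * (Real.pi : ℂ) * Complex.I * j / p) with hωdef
    set t : ℝ := x ^ p with htdef
    have ht : t ∈ Set.Icc β 1 :=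
      ⟨pow_le_pow_left₀ hα0.le hx.1 p, pow_le_one₀ hx0.le hx.2⟩
    have ht0 : 0 < t := lt_of_lt_of_le hβ0 ht.1
    have hzp : ((x:ℂ) * ω) ^ p = ((t : ℝ) : ℂ) := sector_zpow p hp x j
    have hQ : Polynomial.aeval ((x:ℂ) * ω) (Polynomial.X ^ p : Polynomial ℝ) = ((t:ℝ):ℂ) := by
      rw [map_pow, Polynomial.aeval_X, hzp]
    have hP : Polynomial.aeval ((x:ℂ) * ω) (Polynomial.X * (bpoly θ m).comp (Polynomial.X ^ p))
        = (x:ℂ) * ω * (((bpoly θ m).eval t : ℝ) : ℂ) := by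
      rw [map_mul, Polynomial.aeval_X, Polynomial.aeval_comp, map_pow, Polynomial.aeval_X,
        hzp, aeval_ofReal]
    rw [hP, hQ]
    have htne : ((t:ℝ):ℂ) ≠ 0 := Complex.ofReal_ne_zero.2 ht0.ne'
    have hsplit : (x:ℂ) * ω * (((bpoly θ m).eval t : ℝ) : ℂ) / ((t:ℝ):ℂ) - ω
        = ω * ((((x * (bpoly θ m).eval t - t : ℝ)) : ℂ) / ((t:ℝ):ℂ)) := by
      field_simp
      push_cast
      ring
    rw [hsplit, norm_mul, hωdef, abs_sector_exp, one_mul, norm_div, Complex.norm_real,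
      Complex.norm_real, Real.norm_eq_abs, Real.norm_eq_abs, abs_of_pos ht0]
    -- the real estimate
    have hxt : x * t ^ θ = t := by
      have h1 : t ^ θ = x ^ ((p:ℝ) * θ) := by
        rw [htdef, ← Real.rpow_natCast x p, ← Real.rpow_mul hx0.le]
      have h2 : (p:ℝ) * θ = (p:ℝ) - 1 := by
        rw [hθdef]; field_simp
      rw [h1, h2]
      have h3 : x * x ^ ((p:ℝ)-1) = x ^ (1 + ((p:ℝ)-1)) := by
        rw [Real.rpow_add hx0, Real.rpow_one]
      rw [h3, show (1 + ((p:ℝ)-1)) = ((p:ℕ):ℝ) by push_cast; ring, Real.rpow_natCast, htdef]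
    have hnum : |x * (bpoly θ m).eval t - t| ≤ r^(m+1) * β ^ (θ-1) := by
      have h1 : x * (bpoly θ m).eval t - t = x * ((bpoly θ m).eval t - t ^ θ) := by
        rw [mul_sub, hxt]
      rw [h1, abs_mul, abs_of_pos hx0, abs_sub_comm]
      calc x * |t ^ θ - (bpoly θ m).eval t| ≤ 1 * |t ^ θ - (bpoly θ m).eval t| := by
            apply mul_le_mul_of_nonneg_right hx.2 (abs_nonneg _)
        _ ≤ r^(m+1) * β ^ (θ-1) := by
            rw [one_mul, hrdef]
            exact remainder_bound θ hθ (bcoef_abs_le θ hθ) β hβ0 t ht m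
    have hstep : |x * (bpoly θ m).eval t - t| / t ≤ r^(m+1) * C0 := by
      calc |x * (bpoly θ m).eval t - t| / t ≤ (r^(m+1) * β ^ (θ-1)) / β := by
            apply div_le_div₀ (by positivity) hnum hβ0 ht.1
        _ = r^(m+1) * C0 := by rw [hC0def]; ring
    refine le_trans hstep ?_
    -- final numeric comparison
    have hrL : r = Real.exp (-L) := by
      rw [hLdef, neg_neg, Real.exp_log hr0]
    have hC0L : C0 = Real.exp (Real.log C0) := (Real.exp_log hC0).symm
    rw [hrL, hC0L, ← Real.exp_nat_mul, ← Real.exp_add, Real.exp_le_exp]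
    have hn1 : (1:ℝ) ≤ n := by
      have : 4 ≤ n := le_trans (by omega) hn2p
      exact_mod_cast Nat.one_le_iff_ne_zero.2 (by omega)
    have hchat1 : chat ≤ 1 := by
      rw [hchat]
      rw [div_le_one (Real.log_pos (by linarith))]
      exact Real.log_le_log (by norm_num) hp2
    have hpow : (n:ℝ) ^ chat ≤ (n:ℝ) := by
      calc (n:ℝ) ^ chat ≤ (n:ℝ) ^ (1:ℝ) := Real.rpow_le_rpow_of_exponent_le hn1 hchat1
        _ = n := Real.rpow_one n
    have hchat0 : 0 ≤ chat := by
      rw [hchat]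
      exact div_nonneg (Real.log_nonneg (by norm_num)) (Real.log_nonneg (by linarith))
    have hbound1 : -(L / (4*p) * (n:ℝ) ^ chat) ≥ -(L / (4*p) * n) := by
      have := mul_le_mul_of_nonneg_left hpow (le_of_lt (by positivity : (0:ℝ) < L / (4*p)))
      linarith
    refine le_trans ?_ hbound1
    -- m + 1 ≥ n / (2p)
    have hmn : (n:ℝ) - p < p * (m + 1) := by
      have h1 : n - p < p * m + p := by
        rw [hmdef]
        have h2 := Nat.div_add_mod (n - p) p
        have h3 : (n - p) % p < p := Nat.mod_lt _ (by omega)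
        omega
      have h4 : ((n - p : ℕ) : ℝ) = (n:ℝ) - p := by
        push_cast [Nat.cast_sub (by omega : p ≤ n)]; ring
      calc (n:ℝ) - p = ((n - p : ℕ) : ℝ) := h4.symm
        _ < ((p * m + p : ℕ) : ℝ) := by exact_mod_cast h1
        _ = p * (m + 1) := by push_cast; ring
    have hm1 : (n:ℝ) ≤ ((m:ℝ) + 1) * (2*p) := by
      have hpm : (0:ℝ) ≤ (p:ℝ) * m := by positivity
      linarith [hmn, hpm]
    have hlogC0 : Real.log C0 * (4*(p:ℝ)) ≤ L * n := by
      rw [div_le_iff₀ hL] at hnceil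
      linarith [hnceil]
    have key : L * (n:ℝ) ≤ L * (((m:ℝ)+1) * (2*p)) := mul_le_mul_of_nonneg_left hm1 hL.le
    have h4p : (0:ℝ) < 4*p := by linarith
    rw [show L / (4*(p:ℝ)) * (n:ℝ) = L*n/(4*p) from by ring, ← neg_div, le_div_iff₀ h4p]
    push_cast
    linarith [key, hlogC0, hL.le]
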